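/- arXiv:2009.11972 — 6 statements merged into one kernel-verified Lean document; each statement's English description precedes it below -/
import Mathlib

section
/- Let n and t be integers. A triple of integers (x, y, z) satisfies x^3 + y^3 + z^3 = n and x + y + z = t if and only if the integers A = x - t, B = y - t, C = z - t satisfy 3*A*B*C = n - t^3 and A + B + C = -2*t. -/
/-!
Writing `s = x + y + z`, we have `x - s = -(y + z)` and so on, hence the shifted product is
`-(x + y)(y + z)(z + x)`; the classical identity `s³ - (x³ + y³ + z³) = 3(x + y)(y + z)(z + x)`
then turns the cube condition into the product condition, while the linear conditions agree.
-/

section CommRing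

variable {R : Type*} [CommRing R]

theorem three_mul_prod_sub_sum_eq_sum_cubes_sub_cube (x y z : R) :
    3 * ((x - (x + y + z)) * (y - (x + y + z)) * (z - (x + y + z))) =
      x ^ 3 + y ^ 3 + z ^ 3 - (x + y + z) ^ 3 := by
  ring

theorem sub_add_sub_add_sub_eq_neg_two_mul_iff (x y z t : R) :
    (x - t) + (y - t) + (z - t) = -2 * t ↔ x + y + z = t := by
  constructor <;> intro h <;> linear_combination h

end CommRing

theorem cube_sum_height_equiv (n t x y z : ℤ) :
    (x ^ 3 + y ^ 3 + z ^ 3 = n ∧ x + y + z = t) ↔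
      (3 * ((x - t) * (y - t) * (z - t)) = n - t ^ 3 ∧
        (x - t) + (y - t) + (z - t) = -2 * t) := by
  rw [sub_add_sub_add_sub_eq_neg_two_mul_iff, and_congr_left_iff]
  rintro rfl
  rw [three_mul_prod_sub_sum_eq_sum_cubes_sub_cube, sub_left_inj]
end

section
/- Let n and t be integers with n ≠ t^3. Then the set of triples (x, y, z) of integers satisfying x^3 + y^3 + z^3 = n and x + y + z = t is finite. -/
/-!
Writing `d = t ^ 3 - n`, the identity `(x + y + z) ^ 3 - (x ^ 3 + y ^ 3 + z ^ 3) =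
3 (y + z) (x + z) (x + y)` gives `d = 3 (t - x) (t - y) (t - z)` on every solution. As `d ≠ 0`,
each of `t - x`, `t - y`, `t - z` is one of the finitely many divisors of `d`.
-/

theorem pow_three_sub_sum_pow_three_of_add_add_eq {R : Type*} [CommRing R] {x y z t : R}
    (ht : x + y + z = t) :
    t ^ 3 - (x ^ 3 + y ^ 3 + z ^ 3) = 3 * (t - x) * (t - y) * (t - z) := by
  subst ht
  ring

theorem Int.finite_setOf_sub_dvd (t : ℤ) {d : ℤ} (hd : d ≠ 0) : {x : ℤ | t - x ∣ d}.Finite :=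
  (d.divisors.finite_toSet.image (t - ·)).subset fun x hx ↦
    ⟨t - x, by simpa [hd] using hx, sub_sub_cancel t x⟩

theorem cube_sum_height_finite (n t : ℤ) (h : n ≠ t ^ 3) :
    {p : ℤ × ℤ × ℤ | p.1 ^ 3 + p.2.1 ^ 3 + p.2.2 ^ 3 = n ∧
      p.1 + p.2.1 + p.2.2 = t}.Finite := by
  have hd : t ^ 3 - n ≠ 0 := sub_ne_zero.mpr h.symm
  have hdivisors := Int.finite_setOf_sub_dvd t hd
  refine (hdivisors.prod (hdivisors.prod hdivisors)).subset ?_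
  rintro ⟨x, y, z⟩ ⟨hn, ht⟩
  have key : t ^ 3 - n = 3 * (t - x) * (t - y) * (t - z) :=
    hn ▸ pow_three_sub_sum_pow_three_of_add_add_eq ht
  exact ⟨⟨3 * (t - y) * (t - z), by rw [key]; ring⟩, ⟨3 * (t - x) * (t - z), by rw [key]; ring⟩,
    ⟨3 * (t - x) * (t - y), by rw [key]; ring⟩⟩
end

section
/- Let n and t be integers with n ≠ t^3 and 3 | (n - t^3), and set N = (n - t^3)/3. Then the set of triples (x, y, z) of integers with x^3 + y^3 + z^3 = n and x + y + z = t has the same (finite) cardinality as the set of pairs (d, δ) of nonzero integers such that d divides N, δ divides d, and δ + d/δ + N/d = -2*t. A bijection is given by (x, y, z) ↦ (d, δ) = ((x - t)*(y - t), x - t). -/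
/-!
Writing `a = x - t`, `b = y - t`, `c = z - t`, the identity
`(x + y + z)³ - x³ - y³ - z³ = 3 (x + y) (y + z) (z + x)` turns the two equations into
`a b c = N` and `a + b + c = -2t`. Since `N ≠ 0`, such a triple is recovered from
`(d, δ) = (a b, a)` as `(δ, d / δ, N / d)`, and these are exactly the divisor pairs of the statement.
-/

open Set

def sumOfCubesReps (n t : ℤ) : Set (ℤ × ℤ × ℤ) :=
  {p | p.1 ^ 3 + p.2.1 ^ 3 + p.2.2 ^ 3 = n ∧ p.1 + p.2.1 + p.2.2 = t}

def productSumTriples (N s : ℤ) : Set (ℤ × ℤ × ℤ) :=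
  {p | p.1 * p.2.1 * p.2.2 = N ∧ p.1 + p.2.1 + p.2.2 = s}

def divisorPairs (N s : ℤ) : Set (ℤ × ℤ) :=
  {q | q.1 ≠ 0 ∧ q.2 ≠ 0 ∧ q.1 ∣ N ∧ q.2 ∣ q.1 ∧ q.2 + q.1 / q.2 + N / q.1 = s}

theorem sum_cubes_sub_cube_of_add_eq {R : Type*} [CommRing R] {x y z t : R}
    (h : x + y + z = t) :
    x ^ 3 + y ^ 3 + z ^ 3 - t ^ 3 = 3 * ((x - t) * (y - t) * (z - t)) := by
  subst h
  ring

theorem Int.setOf_dvd_finite {N : ℤ} (hN : N ≠ 0) : {d : ℤ | d ∣ N}.Finite :=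
  (finite_Icc (-|N|) |N|).subset fun _ hd ↦
    abs_le.mp (Int.le_of_dvd (abs_pos.mpr hN) ((abs_dvd_abs _ _).mpr hd))

theorem divisorPairs_finite {N : ℤ} (hN : N ≠ 0) (s : ℤ) : (divisorPairs N s).Finite :=
  ((Int.setOf_dvd_finite hN).prod (Int.setOf_dvd_finite hN)).subset
    fun _ ⟨_, _, hdN, hδd, _⟩ ↦ ⟨hdN, hδd.trans hdN⟩

theorem image_productSumTriples {N : ℤ} (hN : N ≠ 0) (s : ℤ) :
    (fun p : ℤ × ℤ × ℤ ↦ (p.1 * p.2.1, p.1)) '' productSumTriples N s = divisorPairs N s := by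
  ext ⟨d, δ⟩
  constructor
  · rintro ⟨⟨a, b, c⟩, ⟨rfl, hsum⟩, heq⟩
    obtain ⟨rfl, rfl⟩ := Prod.mk.inj heq
    have hab : a * b ≠ 0 := left_ne_zero_of_mul hN
    have ha : a ≠ 0 := left_ne_zero_of_mul hab
    refine ⟨hab, ha, dvd_mul_right _ _, dvd_mul_right _ _, ?_⟩
    simpa only [Int.mul_ediv_cancel_left _ ha, Int.mul_ediv_cancel_left _ hab] using hsum
  · rintro ⟨hd, hδ, hdN, hδd, hsum⟩
    dsimp only at hd hδ hdN hδd hsum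
    obtain ⟨b, rfl⟩ := hδd
    obtain ⟨c, rfl⟩ := hdN
    refine ⟨(δ, b, c), ⟨rfl, ?_⟩, rfl⟩
    simpa only [Int.mul_ediv_cancel_left _ hδ, Int.mul_ediv_cancel_left _ hd] using hsum

theorem injOn_productSumTriples {N : ℤ} (hN : N ≠ 0) (s : ℤ) :
    InjOn (fun p : ℤ × ℤ × ℤ ↦ (p.1 * p.2.1, p.1)) (productSumTriples N s) := by
  rintro ⟨a, b, c⟩ ⟨rfl, hsum⟩ ⟨a', b', c'⟩ ⟨-, hsum'⟩ heq
  obtain ⟨hd, rfl⟩ := Prod.mk.inj heq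
  obtain rfl : b = b' := mul_left_cancel₀ (left_ne_zero_of_mul (left_ne_zero_of_mul hN)) hd
  obtain rfl : c = c' := by linarith
  rfl

theorem bijOn_productSumTriples {N : ℤ} (hN : N ≠ 0) (s : ℤ) :
    BijOn (fun p : ℤ × ℤ × ℤ ↦ (p.1 * p.2.1, p.1)) (productSumTriples N s)
      (divisorPairs N s) :=
  image_productSumTriples hN s ▸ (injOn_productSumTriples hN s).bijOn_image

theorem bijOn_sumOfCubesReps_productSumTriples {n t N : ℤ} (h3N : 3 * N = n - t ^ 3) :
    BijOn (fun p : ℤ × ℤ × ℤ ↦ (p.1 - t, p.2.1 - t, p.2.2 - t)) (sumOfCubesReps n t)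
      (productSumTriples N (-2 * t)) := by
  refine (Equiv.prodCongr (Equiv.subRight t)
    (Equiv.prodCongr (Equiv.subRight t) (Equiv.subRight t))).bijOn ?_
  rintro ⟨x, y, z⟩
  change (x - t) * (y - t) * (z - t) = N ∧ x - t + (y - t) + (z - t) = -2 * t ↔
    x ^ 3 + y ^ 3 + z ^ 3 = n ∧ x + y + z = t
  constructor
  · rintro ⟨hprod, hsum⟩
    have hxyz : x + y + z = t := by linarith
    exact ⟨by linear_combination sum_cubes_sub_cube_of_add_eq hxyz + 3 * hprod + h3N, hxyz⟩
  · rintro ⟨hcubes, hxyz⟩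
    refine ⟨mul_left_cancel₀ three_ne_zero ?_, by linarith⟩
    rw [h3N, ← hcubes, sum_cubes_sub_cube_of_add_eq hxyz]

theorem representation_count_eq_divisor_pairs (n t : ℤ) (hn : n ≠ t ^ 3)
    (h3 : 3 ∣ n - t ^ 3) (N : ℤ) (hN : N = (n - t ^ 3) / 3) :
    {p : ℤ × ℤ × ℤ | p.1 ^ 3 + p.2.1 ^ 3 + p.2.2 ^ 3 = n ∧
        p.1 + p.2.1 + p.2.2 = t}.Finite ∧
    Set.BijOn (fun p : ℤ × ℤ × ℤ => ((p.1 - t) * (p.2.1 - t), p.1 - t))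
      {p : ℤ × ℤ × ℤ | p.1 ^ 3 + p.2.1 ^ 3 + p.2.2 ^ 3 = n ∧
        p.1 + p.2.1 + p.2.2 = t}
      {q : ℤ × ℤ | q.1 ≠ 0 ∧ q.2 ≠ 0 ∧ q.1 ∣ N ∧ q.2 ∣ q.1 ∧
        q.2 + q.1 / q.2 + N / q.1 = -2 * t} ∧
    Nat.card {p : ℤ × ℤ × ℤ | p.1 ^ 3 + p.2.1 ^ 3 + p.2.2 ^ 3 = n ∧
        p.1 + p.2.1 + p.2.2 = t} =
      Nat.card {q : ℤ × ℤ | q.1 ≠ 0 ∧ q.2 ≠ 0 ∧ q.1 ∣ N ∧ q.2 ∣ q.1 ∧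
        q.2 + q.1 / q.2 + N / q.1 = -2 * t} := by
  have h3N : 3 * N = n - t ^ 3 := hN ▸ Int.mul_ediv_cancel' h3
  have hN0 : N ≠ 0 := by
    rintro rfl
    exact hn (by linarith)
  have hbij : BijOn _ (sumOfCubesReps n t) (divisorPairs N (-2 * t)) :=
    (bijOn_productSumTriples hN0 _).comp (bijOn_sumOfCubesReps_productSumTriples h3N)
  exact ⟨hbij.finite_iff_finite.mpr (divisorPairs_finite hN0 _), hbij,
    Nat.card_congr (hbij.equiv _)⟩
end

section
/- Let n and t be integers with n ≠ t^3 and 3 | (n - t^3), and set N = (n - t^3)/3. If integers x, y, z satisfy x^3 + y^3 + z^3 = n and x + y + z = t, then there exists a nonzero integer d dividing N and an integer k such that (N/d + 2*t)^2 - 4*d = k^2. -/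
/-!
Put `a = x - t`, `b = y - t`, `c = z - t`. Since `x + y + z = t`, the identity
`(x + y + z)³ - x³ - y³ - z³ = 3 (x + y)(y + z)(z + x)` gives `N = a b c`, so `d = a b` divides `N`
with cofactor `N / d = c`. As `a + b + c = -2t`, we get `c + 2t = -(a + b)`, hence
`(N / d + 2t)² - 4d = (a + b)² - 4ab = (a - b)²`.
-/

section CommRing

variable {R : Type*} [CommRing R] {x y z t : R}

theorem cube_add_cube_add_cube_sub_cube_of_add_eq (h : x + y + z = t) :
    x ^ 3 + y ^ 3 + z ^ 3 - t ^ 3 = 3 * ((x - t) * (y - t) * (z - t)) := by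
  subst h; ring

theorem sq_add_two_mul_sub_four_mul_of_add_eq (h : x + y + z = t) :
    ((z - t) + 2 * t) ^ 2 - 4 * ((x - t) * (y - t)) = (x - y) ^ 2 := by
  subst h; ring

end CommRing

theorem divisor_square_of_representation_general (n t : ℤ) (hn : n ≠ t ^ 3)
    (N : ℤ) (hN : N = (n - t ^ 3) / 3)
    (x y z : ℤ) (h1 : x ^ 3 + y ^ 3 + z ^ 3 = n) (h2 : x + y + z = t) :
    ∃ d k : ℤ, d ≠ 0 ∧ d ∣ N ∧ (N / d + 2 * t) ^ 2 - 4 * d = k ^ 2 := by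
  have hN_eq : N = (x - t) * (y - t) * (z - t) := by
    rw [hN, ← h1, cube_add_cube_add_cube_sub_cube_of_add_eq h2]
    exact Int.mul_ediv_cancel_left _ three_ne_zero
  have hN0 : (x - t) * (y - t) * (z - t) ≠ 0 := by
    intro h
    have hcube := cube_add_cube_add_cube_sub_cube_of_add_eq h2
    rw [h1, h, mul_zero] at hcube
    exact hn (sub_eq_zero.mp hcube)
  have hd0 : (x - t) * (y - t) ≠ 0 := left_ne_zero_of_mul hN0
  have hquot : N / ((x - t) * (y - t)) = z - t := by
    rw [hN_eq]; exact Int.mul_ediv_cancel_left _ hd0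
  refine ⟨(x - t) * (y - t), x - y, hd0, ⟨z - t, hN_eq⟩, ?_⟩
  rw [hquot, sq_add_two_mul_sub_four_mul_of_add_eq h2]

theorem divisor_square_of_representation (n t : ℤ) (hn : n ≠ t ^ 3)
    (h3 : 3 ∣ n - t ^ 3) (N : ℤ) (hN : N = (n - t ^ 3) / 3)
    (x y z : ℤ) (h1 : x ^ 3 + y ^ 3 + z ^ 3 = n) (h2 : x + y + z = t) :
    ∃ d k : ℤ, d ≠ 0 ∧ d ∣ N ∧ (N / d + 2 * t) ^ 2 - 4 * d = k ^ 2 :=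
  divisor_square_of_representation_general n t hn N hN x y z h1 h2
end

section
/- Let n and t be integers with n ≠ t^3 and 3 | (n - t^3), and set N = (n - t^3)/3. If there exist a nonzero integer d dividing N and an integer k with (N/d + 2*t)^2 - 4*d = k^2, then there exist integers x, y, z with x^3 + y^3 + z^3 = n and x + y + z = t. -/
/-!
If `d * e = N` and `m` is an integer root of `X² + (e + 2t) X + d`, then
`x = t + m`, `y = -t - e - m`, `z = t + e` satisfy `x + y + z = t` and, by
`x³ + y³ + z³ = (x + y + z)³ - 3 (x + y) (y + z) (z + x)`, also
`x³ + y³ + z³ = t³ - 3 e m (m + e + 2t) = t³ + 3 d e = t³ + 3 N`.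
The square discriminant makes that root an integer, because `k ≡ e + 2t (mod 2)`.
-/

theorem Int.exists_root_of_discrim_eq_sq {b c k : ℤ} (h : discrim 1 b c = k ^ 2) :
    ∃ m : ℤ, m ^ 2 + b * m + c = 0 := by
  rw [discrim, mul_one] at h
  have hsq : Even (k ^ 2 - b ^ 2) := ⟨-2 * c, by linear_combination -h⟩
  have hpar : Even (k - b) := by
    rw [Int.even_sub] at hsq ⊢
    simpa only [Int.even_pow' two_ne_zero] using hsq
  obtain ⟨m, hm⟩ := hpar
  refine ⟨m, ?_⟩
  have hk : k = b + 2 * m := by linarith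
  have h4 : 4 * (m ^ 2 + b * m + c) = 0 := by rw [hk] at h; linear_combination -h
  linarith

theorem cube_sum_of_root {R : Type*} [CommRing R] {t d e m : R}
    (hm : m ^ 2 + (e + 2 * t) * m + d = 0) :
    (t + m) ^ 3 + (-t - e - m) ^ 3 + (t + e) ^ 3 = t ^ 3 + 3 * (d * e) := by
  linear_combination (-3 * e) * hm

theorem representation_of_divisor_square_general (n t : ℤ)
    (h3 : 3 ∣ n - t ^ 3) (N : ℤ) (hN : N = (n - t ^ 3) / 3)
    (h : ∃ d k : ℤ, d ≠ 0 ∧ d ∣ N ∧ (N / d + 2 * t) ^ 2 - 4 * d = k ^ 2) :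
    ∃ x y z : ℤ, x ^ 3 + y ^ 3 + z ^ 3 = n ∧ x + y + z = t := by
  obtain ⟨d, k, -, hdvd, hk⟩ := h
  have hde : d * (N / d) = N := Int.mul_ediv_cancel' hdvd
  have h3N : 3 * N = n - t ^ 3 := by rw [hN, Int.mul_ediv_cancel' h3]
  obtain ⟨m, hm⟩ := Int.exists_root_of_discrim_eq_sq (b := N / d + 2 * t) (c := d) (k := k)
    (by rw [discrim]; linear_combination hk)
  refine ⟨t + m, -t - N / d - m, t + N / d, ?_, by ring⟩
  rw [cube_sum_of_root hm, hde]
  linear_combination h3N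

theorem representation_of_divisor_square (n t : ℤ) (hn : n ≠ t ^ 3)
    (h3 : 3 ∣ n - t ^ 3) (N : ℤ) (hN : N = (n - t ^ 3) / 3)
    (h : ∃ d k : ℤ, d ≠ 0 ∧ d ∣ N ∧ (N / d + 2 * t) ^ 2 - 4 * d = k ^ 2) :
    ∃ x y z : ℤ, x ^ 3 + y ^ 3 + z ^ 3 = n ∧ x + y + z = t :=
  representation_of_divisor_square_general n t h3 N hN h
end

section
/- Let n be a positive integer with 6 | n. If there exist a positive integer d dividing n/3 and an integer k such that (n/(3*d))^2 - 4*d = k^2, then there exist integers x, y, z with x + y + z = 0 and x^3 + y^3 + z^3 = n. -/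
/-! With `n = 3 d e`, the condition says that `t ^ 2 - e t + d` has integer discriminant `k ^ 2`,
hence (as `e ≡ k mod 2`) an integer root `u`, so `d = u (e - u)`.
Since `x ^ 3 + y ^ 3 + z ^ 3 = 3 x y z` whenever `x + y + z = 0`, the triple `(-u, u - e, e)`
then gives `3 u (e - u) e = 3 d e = n`. -/

theorem add_pow_three_add_pow_three_of_add_add_eq_zero {R : Type*} [CommRing R] {x y z : R}
    (h : x + y + z = 0) : x ^ 3 + y ^ 3 + z ^ 3 = 3 * x * y * z := by
  obtain rfl : z = -(x + y) := by linear_combination h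
  ring

theorem Int.even_sub_of_even_sq_sub_sq {a b : ℤ} (h : Even (a ^ 2 - b ^ 2)) : Even (a - b) := by
  have h' := Int.even_sub.mp h
  rw [Int.even_pow' two_ne_zero, Int.even_pow' two_ne_zero] at h'
  exact Int.even_sub.mpr h'

theorem Int.exists_eq_mul_sub_of_sq_sub_four_mul_eq_sq {e d k : ℤ} (h : e ^ 2 - 4 * d = k ^ 2) :
    ∃ u, d = u * (e - u) := by
  obtain ⟨u, hu⟩ := Int.even_sub_of_even_sq_sub_sq (a := e) (b := k)
    ⟨2 * d, by linear_combination h⟩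
  obtain rfl : k = e - 2 * u := by linear_combination -hu
  exact ⟨u, mul_left_cancel₀ (four_ne_zero' ℤ) (by linear_combination -h)⟩

theorem height_zero_representation_general (n : ℤ) (h6 : 6 ∣ n)
    (h : ∃ d : ℤ, 0 < d ∧ d ∣ n / 3 ∧ ∃ k : ℤ,
      (n / (3 * d)) ^ 2 - 4 * d = k ^ 2) :
    ∃ x y z : ℤ, x + y + z = 0 ∧ x ^ 3 + y ^ 3 + z ^ 3 = n := by
  obtain ⟨d, hd, hdvd, k, hk⟩ := h
  obtain ⟨e, rfl⟩ : 3 * d ∣ n :=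
    Int.mul_dvd_of_dvd_div ((by norm_num : (3 : ℤ) ∣ 6).trans h6) hdvd
  rw [Int.mul_ediv_cancel_left _ (by positivity)] at hk
  obtain ⟨u, rfl⟩ := Int.exists_eq_mul_sub_of_sq_sub_four_mul_eq_sq hk
  refine ⟨-u, u - e, e, by ring, ?_⟩
  rw [add_pow_three_add_pow_three_of_add_add_eq_zero (by ring)]
  ring

theorem height_zero_representation (n : ℤ) (hn : 0 < n) (h6 : 6 ∣ n)
    (h : ∃ d : ℤ, 0 < d ∧ d ∣ n / 3 ∧ ∃ k : ℤ,
      (n / (3 * d)) ^ 2 - 4 * d = k ^ 2) :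
    ∃ x y z : ℤ, x + y + z = 0 ∧ x ^ 3 + y ^ 3 + z ^ 3 = n :=
  height_zero_representation_general n h6 h
end
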